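/- arXiv:math/0505060 — 4 statements merged into one kernel-verified Lean document; each statement's English description precedes it below -/
import Mathlib

section
/- Let k be a nonnegative integer and set α = -k. Then for every complex number z (and all complex β, m such that none of the arguments of the Gamma functions appearing below is a nonpositive integer), the terminating series S(α,β,m,z) = m · Σ_{j=0}^{k} [Γ(β+1+jz)·Γ(m+j(z+1)) / (Γ(α+β+1+j(z+1))·Γ(m+jz+1))] · (α)_j / j! equals Γ(β+1-m)/Γ(α+β+1-m). -/
open Finset

/-- Auxiliary product `q_n(x) = ∏_{i<n} (x + n·w − i)`. -/
noncomputable def qq (w : ℂ) (n : ℕ) (x : ℂ) : ℂ := ∏ i ∈ Finset.range n, (x + n * w - i)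

/-- Auxiliary Gould polynomial `p_0 = 1`, `p_{n+1}(x) = x · q_n(x−1+w)`. -/
noncomputable def pp (w : ℂ) : ℕ → ℂ → ℂ
  | 0, _ => 1
  | n + 1, x => x * qq w n (x - 1 + w)

@[simp] lemma qq_zero (w x : ℂ) : qq w 0 x = 1 := by simp [qq]

@[simp] lemma pp_zero (w x : ℂ) : pp w 0 x = 1 := rfl

lemma pp_succ (w : ℂ) (n : ℕ) (x : ℂ) : pp w (n+1) x = x * qq w n (x - 1 + w) := rfl

lemma qq_succ (w : ℂ) (n : ℕ) (x : ℂ) :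
    qq w (n + 1) x = (x + (n + 1) * w) * qq w n (x - 1 + w) := by
  have h1 : qq w (n+1) x
      = (∏ i ∈ Finset.range n, (x + ((n:ℕ)+1 : ℕ) * w - ((i+1 : ℕ) : ℂ)))
        * (x + ((n:ℕ)+1 : ℕ) * w - ((0:ℕ) : ℂ)) := by
    simp only [qq]
    exact Finset.prod_range_succ' _ n
  rw [h1, mul_comm]
  have h2 : (∏ i ∈ Finset.range n, (x + ((n:ℕ)+1 : ℕ) * w - ((i+1 : ℕ) : ℂ)))
      = qq w n (x - 1 + w) := by
    simp only [qq]
    refine Finset.prod_congr rfl fun i _ => ?_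
    push_cast
    ring
  rw [h2]
  push_cast
  ring_nf

/-- The Gould convolution identity (a form of the Rothe–Hagen identity). -/
lemma gould (w : ℂ) (k : ℕ) : ∀ (x y : ℂ),
    ∑ j ∈ Finset.range (k+1), (k.choose j : ℂ) * pp w j x * qq w (k-j) y
      = qq w k (x+y) := by
  induction k with
  | zero => intro x y; simp
  | succ k IH =>
    intro x y
    set Y := y - 1 + w with hYdef
    set X := x - 1 + w with hXdef
    have hyx : y + X = x + Y := by rw [hXdef, hYdef]; ring
    have hK : qq w k (x + Y)
        = qq w k X + y * ∑ j ∈ Finset.range k,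
            (k.choose j : ℂ) * qq w j X * qq w (k-1-j) Y := by
      have h0 := IH y X
      rw [hyx] at h0
      rw [← h0, Finset.sum_range_succ']
      simp only [pp_zero, Nat.choose_zero_right, Nat.cast_one, one_mul, Nat.sub_zero]
      rw [add_comm]
      congr 1
      have hc : ∀ j ∈ Finset.range k,
          (k.choose (j+1) : ℂ) * pp w (j+1) y * qq w (k-(j+1)) X
            = (fun j => y * ((k.choose (j+1) : ℂ) * qq w j Y * qq w (k-1-j) X)) j := by
        intro j hj
        have e3 : k - (j+1) = k - 1 - j := by omega
        rw [e3, pp_succ]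
        ring
      rw [Finset.sum_congr rfl hc,
        ← Finset.sum_range_reflect
          (fun j => y * ((k.choose (j+1) : ℂ) * qq w j Y * qq w (k-1-j) X)) k]
      rw [Finset.mul_sum]
      refine Finset.sum_congr rfl fun j hj => ?_
      have hjk : j < k := Finset.mem_range.mp hj
      have e1 : k - 1 - j + 1 = k - j := by omega
      have e2 : k - 1 - (k - 1 - j) = j := by omega
      have e4 : k.choose (k - j) = k.choose j := Nat.choose_symm (le_of_lt hjk)
      rw [e1, e2, e4]
      ring
    rw [Finset.sum_range_succ]
    have hpeel : ∀ j ∈ Finset.range (k+1),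
        ((k+1).choose j : ℂ) * pp w j x * qq w (k+1-j) y
          = ((k+1).choose j : ℂ) * pp w j x * ((y + ((k-j : ℕ) + 1) * w) * qq w (k-j) Y) := by
      intro j hj
      have hjk : j < k + 1 := Finset.mem_range.mp hj
      have e1 : k + 1 - j = (k - j) + 1 := by omega
      rw [e1, qq_succ]
    rw [Finset.sum_congr rfl hpeel]
    simp only [Nat.choose_self, Nat.cast_one, one_mul, Nat.sub_self, qq_zero, mul_one]
    have hS : ∑ j ∈ Finset.range (k+1), (k.choose j : ℂ) * pp w j x * qq w (k-j) Y
        = qq w k (x + Y) := IH x Y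
    have hsplit : ∑ j ∈ Finset.range (k+1),
        ((k+1).choose j : ℂ) * pp w j x * ((y + ((k-j : ℕ) + 1) * w) * qq w (k-j) Y)
        = (y + ((k:ℂ) + 1) * w) * ∑ j ∈ Finset.range (k+1), (k.choose j : ℂ) * pp w j x * qq w (k-j) Y
          + x * y * ∑ j ∈ Finset.range k, (k.choose j : ℂ) * qq w j X * qq w (k-1-j) Y := by
      rw [Finset.sum_range_succ', Finset.sum_range_succ' (fun j => (k.choose j : ℂ) * pp w j x * qq w (k-j) Y)]
      simp only [pp_zero, Nat.choose_zero_right, Nat.cast_one, one_mul, Nat.sub_zero]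
      have hterm : ∀ j ∈ Finset.range k,
          ((k+1).choose (j+1) : ℂ) * pp w (j+1) x * ((y + ((k-(j+1) : ℕ) + 1) * w) * qq w (k-(j+1)) Y)
            = (y + ((k:ℂ) + 1) * w) * ((k.choose (j+1) : ℂ) * pp w (j+1) x * qq w (k-(j+1)) Y)
              + x * y * ((k.choose j : ℂ) * qq w j X * qq w (k-1-j) Y) := by
        intro j hj
        have hjk : j < k := Finset.mem_range.mp hj
        have e1 : k - (j+1) = k - 1 - j := by omega
        have e2 : k - (j+1) + 1 = k - j := by omega
        have e2' : ((k - (j+1) : ℕ) : ℂ) + 1 = ((k - j : ℕ) : ℂ) := by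
          exact_mod_cast congrArg (Nat.cast : ℕ → ℂ) e2
        have hp : (k+1).choose (j+1) = k.choose j + k.choose (j+1) := Nat.choose_succ_succ k j
        have hw2 : k.choose (j+1) * (k+1) = (k+1).choose (j+1) * (k-j) := by
          have h := Nat.choose_mul_succ_eq k (j+1)
          rw [h]
          congr 1
          omega
        have hp' : (((k+1).choose (j+1) : ℕ) : ℂ) = (k.choose j : ℂ) + (k.choose (j+1) : ℂ) := by
          exact_mod_cast congrArg (Nat.cast : ℕ → ℂ) hp
        have hw2' : (k.choose (j+1) : ℂ) * ((k:ℂ)+1) = ((k+1).choose (j+1) : ℂ) * ((k-j : ℕ) : ℂ) := by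
          exact_mod_cast congrArg (Nat.cast : ℕ → ℂ) hw2
        rw [pp_succ, e2', e1]
        linear_combination (x * qq w j X * qq w (k-1-j) Y * y) * hp'
          - (x * qq w j X * qq w (k-1-j) Y * w) * hw2'
      rw [Finset.sum_congr rfl hterm, Finset.sum_add_distrib, ← Finset.mul_sum, ← Finset.mul_sum]
      ring
    rw [hsplit, hS]
    have hrhs : qq w (k+1) (x+y) = (x + y + ((k:ℂ)+1) * w) * qq w k (x + Y) := by
      rw [qq_succ]
      congr 1
      rw [hYdef]
      ring
    rw [hrhs, pp_succ, hK]
    ring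

lemma Gamma_add_nat (s : ℂ) (n : ℕ) (h : ∀ i : ℕ, i < n → s + i ≠ 0) :
    Complex.Gamma (s + n) = (∏ i ∈ Finset.range n, (s + i)) * Complex.Gamma s := by
  induction n with
  | zero => simp
  | succ n IH =>
    have hsn : s + n ≠ 0 := h n (by omega)
    have harg : s + ((n+1 : ℕ) : ℂ) = (s + n) + 1 := by push_cast; ring
    rw [harg, Complex.Gamma_add_one _ hsn, IH (fun i hi => h i (by omega)),
      Finset.prod_range_succ]
    ring

/-- The Pochhammer symbol (rising factorial) `(a)_l = a(a+1)⋯(a+l-1)`. -/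
noncomputable def poch (a : ℂ) (l : ℕ) : ℂ := ∏ i ∈ Finset.range l, (a + i)

/-- Ramanujan's claim, terminating case: for `α = -k` a nonpositive integer, the series
`S(α,β,m,z)` (which terminates at `j = k`) equals `Γ(β+1-m)/Γ(α+β+1-m)` for every `z`. -/
theorem ramanujan_terminating (k : ℕ) (α β m z : ℂ) (hα : α = -(k : ℂ))
    (h1 : ∀ j : ℕ, j ≤ k → ∀ N : ℕ, β + 1 + (j : ℂ) * z ≠ -(N : ℂ))
    (h2 : ∀ j : ℕ, j ≤ k → ∀ N : ℕ, m + (j : ℂ) * (z + 1) ≠ -(N : ℂ))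
    (h3 : ∀ j : ℕ, j ≤ k → ∀ N : ℕ, α + β + 1 + (j : ℂ) * (z + 1) ≠ -(N : ℂ))
    (h4 : ∀ j : ℕ, j ≤ k → ∀ N : ℕ, m + (j : ℂ) * z + 1 ≠ -(N : ℂ))
    (h5 : ∀ N : ℕ, β + 1 - m ≠ -(N : ℂ))
    (h6 : ∀ N : ℕ, α + β + 1 - m ≠ -(N : ℂ)) :
    m * ∑ j ∈ Finset.range (k + 1),
        (Complex.Gamma (β + 1 + (j : ℂ) * z) * Complex.Gamma (m + (j : ℂ) * (z + 1)) /
          (Complex.Gamma (α + β + 1 + (j : ℂ) * (z + 1)) *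
            Complex.Gamma (m + (j : ℂ) * z + 1))) * poch α j / (Nat.factorial j : ℂ) =
      Complex.Gamma (β + 1 - m) / Complex.Gamma (α + β + 1 - m) := by
  subst hα
  have hm0 : m ≠ 0 := by
    have := h2 0 (by omega) 0
    simpa using this
  have key : ∀ j ∈ Finset.range (k+1),
      m * ((Complex.Gamma (β + 1 + (j : ℂ) * z) * Complex.Gamma (m + (j : ℂ) * (z + 1)) /
          (Complex.Gamma (-(k:ℂ) + β + 1 + (j : ℂ) * (z + 1)) *
            Complex.Gamma (m + (j : ℂ) * z + 1))) * poch (-(k:ℂ)) j / (Nat.factorial j : ℂ))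
        = (k.choose j : ℂ) * pp (-z) j (-m) * qq (-z) (k - j) (β + (k:ℂ) * z) := by
    intro j hj
    have hjk : j ≤ k := by
      have := Finset.mem_range.mp hj; omega
    set Γ1 := Complex.Gamma (β + 1 + (j : ℂ) * z) with hΓ1
    set Γ2 := Complex.Gamma (m + (j : ℂ) * (z + 1)) with hΓ2
    set Γ3 := Complex.Gamma (-(k:ℂ) + β + 1 + (j : ℂ) * (z + 1)) with hΓ3
    set Γ4 := Complex.Gamma (m + (j : ℂ) * z + 1) with hΓ4
    have hG3 : Γ3 ≠ 0 := Complex.Gamma_ne_zero (fun N => h3 j hjk N)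
    have hG4 : Γ4 ≠ 0 := Complex.Gamma_ne_zero (fun N => h4 j hjk N)
    have hfac : ((Nat.factorial j : ℕ) : ℂ) ≠ 0 :=
      Nat.cast_ne_zero.mpr (Nat.factorial_ne_zero j)
    -- (A)
    have hA : Γ1 = qq (-z) (k - j) (β + (k:ℂ) * z) * Γ3 := by
      have hs : (-(k:ℂ) + β + 1 + (j : ℂ) * (z + 1)) + ((k - j : ℕ) : ℂ)
          = β + 1 + (j : ℂ) * z := by
        rw [Nat.cast_sub hjk]
        ring
      rw [hΓ1, hΓ3, ← hs, Gamma_add_nat _ _ ?_]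
      · congr 1
        rw [← Finset.prod_range_reflect
          (fun i => (-(k:ℂ) + β + 1 + (j : ℂ) * (z + 1)) + (i : ℂ)) (k - j)]
        simp only [qq]
        refine Finset.prod_congr rfl fun i hi => ?_
        have hik : i < k - j := Finset.mem_range.mp hi
        have ec : ((k - j - 1 - i : ℕ) : ℂ) = ((k - j : ℕ) : ℂ) - 1 - (i : ℂ) := by
          have e1 : i ≤ k - j - 1 := by omega
          have e2 : 1 ≤ k - j := by omega
          rw [Nat.cast_sub e1, Nat.cast_sub e2, Nat.cast_one]
        rw [ec, Nat.cast_sub hjk]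
        ring
      · intro i hi heq
        exact h3 j hjk i (by linear_combination heq)
    -- (B)
    have hB : m * Γ2 = (-1)^j * pp (-z) j (-m) * Γ4 := by
      cases j with
      | zero =>
        have e2 : m + ((0:ℕ):ℂ) * (z + 1) = m := by push_cast; ring
        have e4 : m + ((0:ℕ):ℂ) * z + 1 = m + 1 := by push_cast; ring
        rw [hΓ2, hΓ4, e2, e4, Complex.Gamma_add_one m hm0]
        simp
      | succ j' =>
        have harg : m + ((j'+1 : ℕ) : ℂ) * (z + 1)
            = (m + ((j'+1 : ℕ) : ℂ) * z + 1) + (j' : ℂ) := by push_cast; ring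
        have hcond : ∀ i : ℕ, i < j' → (m + ((j'+1 : ℕ) : ℂ) * z + 1) + (i : ℂ) ≠ 0 := by
          intro i hi heq
          exact h4 (j'+1) hjk i (by linear_combination heq)
        rw [hΓ2, hΓ4, harg, Gamma_add_nat _ _ hcond, pp_succ]
        have hqq : qq (-z) j' (-m - 1 + -z)
            = ∏ i ∈ Finset.range j', ((-1) * ((m + ((j'+1 : ℕ) : ℂ) * z + 1) + (i : ℂ))) := by
          simp only [qq]
          refine Finset.prod_congr rfl fun i _ => ?_
          push_cast
          ring
        rw [hqq, Finset.prod_mul_distrib, Finset.prod_const, Finset.card_range]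
        have hsq' : ((-1 : ℂ))^j' * (-1)^j' = 1 := by
          rw [← pow_add, ← two_mul, pow_mul]
          norm_num
        linear_combination (-(m * (∏ i ∈ Finset.range j', (m + ((j'+1 : ℕ) : ℂ) * z + 1 + (i : ℂ)))
          * Complex.Gamma (m + ((j'+1 : ℕ) : ℂ) * z + 1))) * hsq'
    -- (C)
    have hC : poch (-(k:ℂ)) j = (-1)^j * ((Nat.factorial j * k.choose j : ℕ) : ℂ) := by
      have h1' : poch (-(k:ℂ)) j = ∏ i ∈ Finset.range j, ((-1) * ((k:ℂ) - (i:ℂ))) := by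
        simp only [poch]
        refine Finset.prod_congr rfl fun i _ => ?_
        ring
      have h2' : ∏ i ∈ Finset.range j, ((k:ℂ) - (i:ℂ)) = ((k.descFactorial j : ℕ) : ℂ) := by
        rw [Nat.descFactorial_eq_prod_range, Nat.cast_prod]
        refine Finset.prod_congr rfl fun i hi => ?_
        have hik : i < j := Finset.mem_range.mp hi
        rw [Nat.cast_sub (by omega)]
      rw [h1', Finset.prod_mul_distrib, Finset.prod_const, h2',
        Nat.descFactorial_eq_factorial_mul_choose, Finset.card_range]
    have hsq : ((-1 : ℂ))^j * (-1)^j = 1 := by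
      rw [← pow_add, ← two_mul, pow_mul]
      norm_num
    have goal' : m * (Γ1 * Γ2) * poch (-(k:ℂ)) j
        = ((k.choose j : ℂ) * pp (-z) j (-m) * qq (-z) (k - j) (β + (k:ℂ) * z))
          * (Γ3 * Γ4) * (Nat.factorial j : ℂ) := by
      calc m * (Γ1 * Γ2) * poch (-(k:ℂ)) j
          = Γ1 * (m * Γ2) * poch (-(k:ℂ)) j := by ring
        _ = (qq (-z) (k - j) (β + (k:ℂ) * z) * Γ3) * ((-1)^j * pp (-z) j (-m) * Γ4)
            * ((-1)^j * ((Nat.factorial j * k.choose j : ℕ) : ℂ)) := by rw [hA, hB, hC]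
        _ = _ := by
            push_cast
            linear_combination (qq (-z) (k - j) (β + (k:ℂ) * z) * pp (-z) j (-m) * Γ3 * Γ4
              * (Nat.factorial j : ℂ) * (k.choose j : ℂ)) * hsq
    have h34 : Γ3 * Γ4 ≠ 0 := mul_ne_zero hG3 hG4
    have hcmul : (Γ3 * Γ4) * ((Nat.factorial j : ℕ) : ℂ) ≠ 0 := mul_ne_zero h34 hfac
    refine mul_right_cancel₀ hcmul ?_
    have lhs_eq : m * ((Γ1 * Γ2 / (Γ3 * Γ4)) * poch (-(k:ℂ)) j / (Nat.factorial j : ℂ))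
        * ((Γ3 * Γ4) * ((Nat.factorial j : ℕ) : ℂ))
        = m * (Γ1 * Γ2) * poch (-(k:ℂ)) j * ((Γ3 * Γ4)⁻¹ * (Γ3 * Γ4))
          * (((Nat.factorial j : ℕ) : ℂ)⁻¹ * ((Nat.factorial j : ℕ) : ℂ)) := by
      simp only [div_eq_mul_inv]
      ring
    rw [lhs_eq, inv_mul_cancel₀ h34, inv_mul_cancel₀ hfac, mul_one, mul_one, goal']
    ring
  rw [Finset.mul_sum, Finset.sum_congr rfl key, gould (-z) k (-m) (β + (k:ℂ) * z)]
  -- final Gamma identity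
  have hcond : ∀ i : ℕ, i < k → (-(k:ℂ) + β + 1 - m) + (i : ℂ) ≠ 0 := by
    intro i hi heq
    exact h6 i (by linear_combination heq)
  have hGs : Complex.Gamma (-(k:ℂ) + β + 1 - m) ≠ 0 :=
    Complex.Gamma_ne_zero (fun N => h6 N)
  have hD : Complex.Gamma (β + 1 - m)
      = qq (-z) k (-m + (β + (k:ℂ) * z)) * Complex.Gamma (-(k:ℂ) + β + 1 - m) := by
    have hs : (-(k:ℂ) + β + 1 - m) + (k : ℂ) = β + 1 - m := by ring
    rw [← hs, Gamma_add_nat _ _ hcond]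
    congr 1
    rw [← Finset.prod_range_reflect (fun i => (-(k:ℂ) + β + 1 - m) + (i : ℂ)) k]
    simp only [qq]
    refine Finset.prod_congr rfl fun i hi => ?_
    have hik : i < k := Finset.mem_range.mp hi
    have ec : ((k - 1 - i : ℕ) : ℂ) = (k : ℂ) - 1 - (i : ℂ) := by
      have e1 : i ≤ k - 1 := by omega
      have e2 : 1 ≤ k := by omega
      rw [Nat.cast_sub e1, Nat.cast_sub e2, Nat.cast_one]
    rw [ec]
    ring
  rw [hD, mul_div_assoc, div_self hGs, mul_one]
end

section
/- Let k be a nonnegative integer and let a, c, d be complex numbers with Re(d) > Re(a) > 0 (and such that no denominator parameter below is a nonpositive integer exceeding -k, so that all terms are defined). Then Σ_{j=0}^{k} [(a/2)_j · ((a+1)/2)_j · (-k)_j · (c)_j] / [(d/2)_j · ((d+1)/2)_j · (-k+a+c+1-d)_j · j!] = [(d-a)_k · (d-c)_k / ((d-a-c)_k · (d)_k)] · Σ_{j=0}^{k} [(-k)_j · (a)_j · (c)_j] / [(k+d)_j · (d-c)_j · j!]. -/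
open Finset Polynomial

theorem poch_zero (a : ℂ) : poch a 0 = 1 := prod_range_zero _

theorem poch_succ_right (a : ℂ) (n : ℕ) : poch a (n + 1) = poch a n * (a + n) :=
  prod_range_succ _ n

theorem poch_add (a : ℂ) (m n : ℕ) : poch a (m + n) = poch a m * poch (a + m) n := by
  simp only [poch, prod_range_add, Nat.cast_add, add_assoc]

theorem poch_succ_left (a : ℂ) (n : ℕ) : poch a (n + 1) = a * poch (a + 1) n := by
  rw [add_comm, poch_add, poch, prod_range_one, Nat.cast_zero, add_zero, Nat.cast_one]

theorem poch_mul_poch_add_sub (a : ℂ) {m n : ℕ} (h : m ≤ n) :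
    poch a m * poch (a + m) (n - m) = poch a n := by
  rw [← poch_add, Nat.add_sub_cancel' h]

theorem poch_ne_zero_of_le {a : ℂ} {m n : ℕ} (h : poch a n ≠ 0) (hmn : m ≤ n) :
    poch a m ≠ 0 :=
  left_ne_zero_of_mul (poch_mul_poch_add_sub a hmn ▸ h)

theorem poch_add_ne_zero_of_add_le {a : ℂ} {m l n : ℕ} (h : poch a n ≠ 0)
    (hmn : m + l ≤ n) : poch (a + m) l ≠ 0 :=
  right_ne_zero_of_mul (poch_add a m l ▸ poch_ne_zero_of_le h hmn)

theorem poch_one_sub_sub (x : ℂ) (n : ℕ) : poch (1 - x - n) n = (-1) ^ n * poch x n := by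
  induction n with
  | zero => simp [poch_zero]
  | succ n ih =>
    rw [poch_succ_left, show 1 - x - ((n + 1 : ℕ) : ℂ) + 1 = 1 - x - n by push_cast; ring, ih,
      poch_succ_right]
    push_cast
    ring

theorem poch_two_mul (x : ℂ) (j : ℕ) :
    poch x (2 * j) = 4 ^ j * poch (x / 2) j * poch ((x + 1) / 2) j := by
  induction j with
  | zero => simp [poch_zero]
  | succ j ih =>
    rw [show 2 * (j + 1) = 2 * j + 1 + 1 by ring, poch_succ_right, poch_succ_right, ih,
      poch_succ_right (x / 2), poch_succ_right ((x + 1) / 2)]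
    push_cast
    ring

theorem smeval_descPochhammer_eq_poch (r : ℂ) (n : ℕ) :
    (descPochhammer ℤ n).smeval r = poch (r - n + 1) n := by
  induction n with
  | zero => simp [poch_zero]
  | succ n ih =>
    rw [descPochhammer_succ_right, smeval_mul, ih, smeval_sub, smeval_X, smeval_natCast,
      poch_succ_left, show r - ((n + 1 : ℕ) : ℂ) + 1 + 1 = r - n + 1 by push_cast; ring]
    simp only [pow_one, pow_zero, nsmul_eq_mul, mul_one]
    push_cast
    ring

theorem poch_neg_natCast (n i : ℕ) : poch (-n) i = (-1) ^ i * (n.choose i * i.factorial) := by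
  have h := poch_one_sub_sub (n - i + 1) i
  rw [show 1 - ((n : ℂ) - i + 1) - i = -n by ring, ← smeval_descPochhammer_eq_poch,
    descPochhammer_smeval_eq_descFactorial, Nat.descFactorial_eq_factorial_mul_choose] at h
  rw [h]
  push_cast
  ring

theorem poch_neg_natCast_add_div_factorial (i m : ℕ) :
    poch (-((i + m : ℕ) : ℂ)) i / (i + m).factorial = (-1) ^ i / m.factorial := by
  have hfac : ((i + m).factorial : ℂ) = (i + m).choose i * i.factorial * m.factorial := by
    have h := Nat.add_choose_mul_factorial_mul_factorial i m
    rw [← Nat.choose_symm_add] at h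
    exact_mod_cast h.symm
  have hne : ((i + m).choose i * i.factorial : ℂ) ≠ 0 := by
    exact_mod_cast (Nat.mul_pos (Nat.choose_pos (Nat.le_add_right i m)) i.factorial_pos).ne'
  rw [poch_neg_natCast, hfac, ← mul_div_mul_left ((-1 : ℂ) ^ i) _ hne]
  ring

theorem chu_vandermonde_cleared (b c : ℂ) (n : ℕ) :
    ∑ i ∈ range (n + 1), (-1) ^ i * n.choose i * poch b i * poch (c + i) (n - i) =
      poch (c - b) n := by
  have h := Ring.descPochhammer_smeval_add (r := -b) (s := c + n - 1) n (Commute.all _ _)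
  simp only [smeval_descPochhammer_eq_poch] at h
  rw [show -b + (c + n - 1) - n + 1 = c - b by ring,
    Nat.sum_antidiagonal_eq_sum_range_succ (fun i j => (n.choose i : ℂ) *
      (poch (-b - i + 1) i * poch (c + n - 1 - j + 1) j))] at h
  rw [h]
  refine sum_congr rfl fun i hi => ?_
  have hin : i ≤ n := Nat.lt_succ_iff.mp (mem_range.mp hi)
  rw [show -b - i + 1 = 1 - b - i by ring, poch_one_sub_sub,
    show c + n - 1 - ((n - i : ℕ) : ℂ) + 1 = c + i by rw [Nat.cast_sub hin]; ring]
  ring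

theorem chu_vandermonde (b c : ℂ) (n : ℕ) (hc : poch c n ≠ 0) :
    ∑ i ∈ range (n + 1), poch (-n) i * poch b i / (poch c i * i.factorial) =
      poch (c - b) n / poch c n := by
  rw [← chu_vandermonde_cleared, sum_div]
  refine sum_congr rfl fun i hi => ?_
  have hin : i ≤ n := Nat.lt_succ_iff.mp (mem_range.mp hi)
  have hci : poch c i ≠ 0 := poch_ne_zero_of_le hc hin
  have hcin : poch (c + i) (n - i) ≠ 0 := poch_add_ne_zero_of_add_le hc (by omega)
  have hfac : (i.factorial : ℂ) ≠ 0 := Nat.cast_ne_zero.mpr i.factorial_ne_zero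
  rw [poch_neg_natCast, ← poch_mul_poch_add_sub c hin]
  field_simp

/-- The `j`-th term of the Pfaff–Saalschütz sum multiplied by `(z)_n (z-x-y)_n`. -/
noncomputable def saalschutzTerm (x y z : ℂ) (n j : ℕ) : ℂ :=
  n.choose j * poch x j * poch y j * poch (z + j) (n - j) * poch (z - x - y) (n - j)

theorem saalschutzTerm_succ_zero (x y z : ℂ) (n : ℕ) :
    saalschutzTerm x y z (n + 1) 0 = (z + n) * (z - x - y + n) * saalschutzTerm x y z n 0 := by
  simp only [saalschutzTerm, Nat.choose_zero_right, Nat.sub_zero, poch_succ_right, poch_zero,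
    Nat.cast_zero, add_zero]
  ring

theorem saalschutzTerm_succ_succ (x y z : ℂ) {n j : ℕ} (hj : j ≤ n) :
    saalschutzTerm x y z (n + 1) (j + 1) =
      (z + n) * (z - x - y + n) * saalschutzTerm x y z n (j + 1) +
        x * y * saalschutzTerm (x + 1) (y + 1) (z + 1) n j := by
  obtain ⟨m, rfl⟩ := Nat.exists_eq_add_of_le hj
  simp only [saalschutzTerm, poch_succ_left x, poch_succ_left y, Nat.choose_succ_succ,
    Nat.add_sub_add_right, Nat.add_sub_cancel_left]
  rcases m with _ | m
  · simp only [add_zero, Nat.succ_eq_add_one, Nat.choose_self, Nat.choose_succ_self, poch_zero]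
    push_cast
    ring
  · have hchoose : ((j + (m + 1)).choose (j + 1) : ℂ) * (j + 1) =
        (j + (m + 1)).choose j * (m + 1) := by
      have h := Nat.choose_succ_right_eq (j + (m + 1)) j
      rw [Nat.add_sub_cancel_left] at h
      exact_mod_cast h
    rw [show j + (m + 1) - (j + 1) = m by omega, show z + 1 + (j : ℂ) = z + (j + 1 : ℕ) by
      push_cast; ring, poch_succ_right (z + _) m,
      poch_succ_right (z - x - y) m, poch_succ_left (z + 1 - (x + 1) - (y + 1)),
      show z + 1 - (x + 1) - (y + 1) + 1 = z - x - y by ring]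
    push_cast
    linear_combination (-(x * poch (x + 1) j * y * poch (y + 1) j *
      poch (z + (j + 1)) m * poch (z - x - y) m * (z + (j + 1) + m))) * hchoose

theorem sum_saalschutzTerm (n : ℕ) (x y z : ℂ) :
    ∑ j ∈ range (n + 1), saalschutzTerm x y z n j = poch (z - x) n * poch (z - y) n := by
  induction n generalizing x y z with
  | zero => simp [saalschutzTerm, poch_zero]
  | succ n ih =>
    have hlast : saalschutzTerm x y z n (n + 1) = 0 := by
      simp [saalschutzTerm, Nat.choose_succ_self]
    calc ∑ j ∈ range (n + 2), saalschutzTerm x y z (n + 1) j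
        = (z + n) * (z - x - y + n) * ∑ j ∈ range (n + 2), saalschutzTerm x y z n j +
            x * y * ∑ j ∈ range (n + 1), saalschutzTerm (x + 1) (y + 1) (z + 1) n j := by
          rw [sum_range_succ', sum_congr rfl fun j hj =>
            saalschutzTerm_succ_succ x y z (Nat.lt_succ_iff.mp (mem_range.mp hj)),
            sum_add_distrib, ← mul_sum, ← mul_sum, saalschutzTerm_succ_zero,
            sum_range_succ' (saalschutzTerm x y z n)]
          ring
      _ = ((z + n) * (z - x - y + n) + x * y) * (poch (z - x) n * poch (z - y) n) := by
          rw [sum_range_succ, hlast, add_zero, ih, ih,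
            show z + 1 - (x + 1) = z - x by ring, show z + 1 - (y + 1) = z - y by ring]
          ring
      _ = poch (z - x) (n + 1) * poch (z - y) (n + 1) := by
          rw [poch_succ_right, poch_succ_right]
          ring

theorem pfaff_saalschutz (x y z : ℂ) (n : ℕ) (hz : poch z n ≠ 0)
    (he : poch (1 + x + y - z - n) n ≠ 0) :
    ∑ j ∈ range (n + 1), poch (-n) j * poch x j * poch y j /
        (poch z j * poch (1 + x + y - z - n) j * j.factorial) =
      poch (z - x) n * poch (z - y) n / (poch z n * poch (z - x - y) n) := by
  have hreflect : ∀ l ≤ n,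
      poch (1 + x + y - z - n) l = (-1) ^ l * poch (z - x - y + (n - l : ℕ)) l := by
    intro l hl
    rw [← poch_one_sub_sub, Nat.cast_sub hl]
    ring_nf
  have hw : poch (z - x - y) n ≠ 0 := by
    have h := hreflect n le_rfl
    rw [Nat.sub_self, Nat.cast_zero, add_zero] at h
    exact right_ne_zero_of_mul (h ▸ he)
  rw [← sum_saalschutzTerm, sum_div]
  refine sum_congr rfl fun j hj => ?_
  have hjn : j ≤ n := Nat.lt_succ_iff.mp (mem_range.mp hj)
  have hzj : poch z j ≠ 0 := poch_ne_zero_of_le hz hjn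
  have hzjn : poch (z + j) (n - j) ≠ 0 := poch_add_ne_zero_of_add_le hz (by omega)
  have hsplit := poch_add (z - x - y) (n - j) j
  rw [Nat.sub_add_cancel hjn] at hsplit
  have hwj : poch (z - x - y) (n - j) ≠ 0 := left_ne_zero_of_mul (hsplit ▸ hw)
  have hwj' : poch (z - x - y + (n - j : ℕ)) j ≠ 0 := right_ne_zero_of_mul (hsplit ▸ hw)
  have hfac : (j.factorial : ℂ) ≠ 0 := Nat.cast_ne_zero.mpr j.factorial_ne_zero
  rw [poch_neg_natCast, hreflect j hjn, ← poch_mul_poch_add_sub z hjn, hsplit, saalschutzTerm]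
  field_simp

theorem poch_halves_div_poch_halves (a d : ℂ) (j : ℕ) (hd : poch (d + j) j ≠ 0) :
    poch (a / 2) j * poch ((a + 1) / 2) j / (poch (d / 2) j * poch ((d + 1) / 2) j) =
      poch a j / poch d j *
        ∑ i ∈ range (j + 1), poch (-j) i * poch (d - a) i / (poch (d + j) i * i.factorial) := by
  have hquad (x : ℂ) : 4 ^ j * (poch (x / 2) j * poch ((x + 1) / 2) j) =
      poch x j * poch (x + j) j := by
    rw [← poch_add, ← two_mul, poch_two_mul, mul_assoc]
  rw [chu_vandermonde _ _ _ hd, show d + j - (d - a) = a + j by ring, div_mul_div_comm, ← hquad,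
    ← hquad, mul_div_mul_left _ _ (pow_ne_zero _ (by norm_num))]

theorem sum_range_sum_range_succ_comm {M : Type*} [AddCommMonoid M] (f : ℕ → ℕ → M)
    (n : ℕ) :
    ∑ j ∈ range n, ∑ i ∈ range (j + 1), f j i =
      ∑ i ∈ range n, ∑ m ∈ range (n - i), f (i + m) i := by
  conv_lhs => simp only [range_eq_Ico]
  rw [← sum_Ico_Ico_comm 0 n (fun i j => f j i), ← range_eq_Ico]
  exact sum_congr rfl fun i _ => sum_Ico_eq_sum_range _ _ _

noncomputable def askeyIsmailSummand (k : ℕ) (a c d : ℂ) (j i : ℕ) : ℂ :=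
  poch a j * poch (-k) j * poch c j / (poch d j * poch (-k + a + c + 1 - d) j * j.factorial) *
    (poch (-j) i * poch (d - a) i / (poch (d + j) i * i.factorial))

section AskeyIsmail

variable (k : ℕ) (a c d : ℂ)

theorem askeyIsmail_term_eq_sum {j : ℕ} (hd : poch (d + j) j ≠ 0) :
    poch (a / 2) j * poch ((a + 1) / 2) j * poch (-k) j * poch c j /
        (poch (d / 2) j * poch ((d + 1) / 2) j * poch (-k + a + c + 1 - d) j * j.factorial) =
      ∑ i ∈ range (j + 1), askeyIsmailSummand k a c d j i := by
  calc _ = poch (a / 2) j * poch ((a + 1) / 2) j / (poch (d / 2) j * poch ((d + 1) / 2) j) *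
        (poch (-k) j * poch c j / (poch (-k + a + c + 1 - d) j * j.factorial)) := by ring
    _ = _ := by
      rw [poch_halves_div_poch_halves a d j hd, mul_sum, sum_mul]
      refine sum_congr rfl fun i _ => ?_
      rw [askeyIsmailSummand]
      ring

theorem askeyIsmailSummand_add (i m : ℕ) :
    askeyIsmailSummand k a c d (i + m) i =
      (-1) ^ i * poch a i * poch (-k) i * poch c i * poch (d - a) i /
          (poch d (i + i) * poch (-k + a + c + 1 - d) i * i.factorial) *
        (poch (-k + i) m * poch (a + i) m * poch (c + i) m /
          (poch (d + (i + i : ℕ)) m * poch (-k + a + c + 1 - d + i) m * m.factorial)) := by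
  have hd : poch d (i + m) * poch (d + (i + m : ℕ)) i =
      poch d (i + i) * poch (d + (i + i : ℕ)) m := by
    rw [← poch_add, ← poch_add, show i + m + i = i + i + m by ring]
  calc askeyIsmailSummand k a c d (i + m) i
      = poch a (i + m) * poch (-k) (i + m) * poch c (i + m) * poch (d - a) i /
            (poch (-k + a + c + 1 - d) (i + m) * i.factorial) /
          (poch d (i + m) * poch (d + (i + m : ℕ)) i) *
          (poch (-(i + m : ℕ)) i / (i + m).factorial) := by
        rw [askeyIsmailSummand]
        ring
    _ = poch a (i + m) * poch (-k) (i + m) * poch c (i + m) * poch (d - a) i /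
            (poch (-k + a + c + 1 - d) (i + m) * i.factorial) /
          (poch d (i + i) * poch (d + (i + i : ℕ)) m) * ((-1) ^ i / m.factorial) := by
        rw [hd, poch_neg_natCast_add_div_factorial]
    _ = _ := by
        rw [poch_add a, poch_add (-k), poch_add c, poch_add (-k + a + c + 1 - d)]
        ring

theorem askeyIsmail_inner_sum {i n : ℕ} (hz : poch (d + (i + i : ℕ)) n ≠ 0)
    (he : poch (-((i + n : ℕ) : ℂ) + a + c + 1 - d + i) n ≠ 0) :
    ∑ m ∈ range (n + 1), poch (-((i + n : ℕ) : ℂ) + i) m * poch (a + i) m * poch (c + i) m /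
        (poch (d + (i + i : ℕ)) m * poch (-((i + n : ℕ) : ℂ) + a + c + 1 - d + i) m *
          m.factorial) =
      poch (d - a + i) n * poch (d - c + i) n /
        (poch (d + (i + i : ℕ)) n * poch (d - a - c) n) := by
  have hbalanced : 1 + (a + i) + (c + i) - (d + (i + i : ℕ)) - n =
      -((i + n : ℕ) : ℂ) + a + c + 1 - d + i := by
    push_cast
    ring
  have hps := pfaff_saalschutz (a + i) (c + i) (d + (i + i : ℕ)) n hz (hbalanced ▸ he)
  rwa [hbalanced, show -(n : ℂ) = -((i + n : ℕ) : ℂ) + i by push_cast; ring,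
    show d + (i + i : ℕ) - (a + i) - (c + i) = d - a - c by push_cast; ring,
    show d + (i + i : ℕ) - (a + i) = d - a + i by push_cast; ring,
    show d + (i + i : ℕ) - (c + i) = d - c + i by push_cast; ring] at hps

theorem sum_askeyIsmailSummand_add {i : ℕ} (hik : i ≤ k)
    (he : poch (-k + a + c + 1 - d) k ≠ 0) (hd : poch d k ≠ 0) (hdk : poch (k + d) i ≠ 0)
    (hdc : poch (d - c) i ≠ 0) :
    ∑ m ∈ range (k + 1 - i), askeyIsmailSummand k a c d (i + m) i =
      poch (d - a) k * poch (d - c) k / (poch (d - a - c) k * poch d k) *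
        (poch (-k) i * poch a i * poch c i /
          (poch (k + d) i * poch (d - c) i * i.factorial)) := by
  obtain ⟨n, rfl⟩ := Nat.exists_eq_add_of_le hik
  set e : ℂ := -((i + n : ℕ) : ℂ) + a + c + 1 - d with he_def
  have hdd : poch d (i + n) * poch ((i + n : ℕ) + d) i =
      poch d (i + i) * poch (d + (i + i : ℕ)) n := by
    rw [add_comm _ d, ← poch_add, ← poch_add, show i + n + i = i + i + n by ring]
  have hz : poch (d + (i + i : ℕ)) n ≠ 0 := right_ne_zero_of_mul (hdd ▸ mul_ne_zero hd hdk)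
  have hEW : poch e i * poch (d - a - c) n = (-1) ^ i * poch (d - a - c) (i + n) := by
    rw [show e = 1 - (d - a - c + n) - i by rw [he_def]; push_cast; ring, poch_one_sub_sub,
      add_comm i n, poch_add]
    ring
  have hdcn : poch (d - c + i) n = poch (d - c) (i + n) / poch (d - c) i := by
    rw [poch_add, mul_div_cancel_left₀ _ hdc]
  rw [show i + n + 1 - i = n + 1 by omega,
    sum_congr rfl fun m _ => askeyIsmailSummand_add _ _ _ _ i m, ← mul_sum,
    askeyIsmail_inner_sum a c d hz (poch_add_ne_zero_of_add_le he le_rfl), ← he_def]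
  calc _ = (-1) ^ i * (poch a i * poch (-((i + n : ℕ) : ℂ)) i * poch c i *
          (poch (d - a) i * poch (d - a + i) n) * poch (d - c + i) n) /
        ((poch d (i + i) * poch (d + (i + i : ℕ)) n) * (poch e i * poch (d - a - c) n) *
          i.factorial) := by ring
    _ = (-1) ^ i * (poch a i * poch (-((i + n : ℕ) : ℂ)) i * poch c i * poch (d - a) (i + n) *
          (poch (d - c) (i + n) / poch (d - c) i)) /
        ((-1) ^ i * (poch d (i + n) * poch ((i + n : ℕ) + d) i * poch (d - a - c) (i + n) *
          i.factorial)) := by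
        rw [← poch_add (d - a) i n, hdcn, ← hdd, hEW]
        ring
    _ = _ := by
        rw [mul_div_mul_left _ _ (pow_ne_zero _ (by norm_num))]
        ring

end AskeyIsmail

theorem askey_ismail_transformation_general (k : ℕ) (a c d : ℂ)
    (h3 : poch (-(k : ℂ) + a + c + 1 - d) k ≠ 0)
    (h4 : poch ((k : ℂ) + d) k ≠ 0)
    (h5 : poch (d - c) k ≠ 0)
    (h7 : poch d k ≠ 0) :
    ∑ j ∈ Finset.range (k + 1),
        poch (a / 2) j * poch ((a + 1) / 2) j * poch (-(k : ℂ)) j * poch c j /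
          (poch (d / 2) j * poch ((d + 1) / 2) j * poch (-(k : ℂ) + a + c + 1 - d) j *
            (Nat.factorial j : ℂ)) =
      (poch (d - a) k * poch (d - c) k / (poch (d - a - c) k * poch d k)) *
        ∑ j ∈ Finset.range (k + 1),
          poch (-(k : ℂ)) j * poch a j * poch c j /
            (poch ((k : ℂ) + d) j * poch (d - c) j * (Nat.factorial j : ℂ)) := by
  have hd : poch d (k + k) ≠ 0 := by
    rw [poch_add, add_comm d]
    exact mul_ne_zero h7 h4
  rw [sum_congr rfl fun j hj => askeyIsmail_term_eq_sum k a c d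
      (poch_add_ne_zero_of_add_le hd (by have := mem_range.mp hj; omega)),
    sum_range_sum_range_succ_comm, mul_sum]
  refine sum_congr rfl fun i hi => ?_
  have hik : i ≤ k := Nat.lt_succ_iff.mp (mem_range.mp hi)
  exact sum_askeyIsmailSummand_add k a c d hik h3 h7 (poch_ne_zero_of_le h4 hik)
    (poch_ne_zero_of_le h5 hik)

/-- The Askey–Ismail `₄F₃` transformation: a terminating `₄F₃` at `1` equals a Pochhammer ratio
times a terminating `₃F₂` at `1`, for `Re d > Re a > 0`. -/
theorem askey_ismail_transformation (k : ℕ) (a c d : ℂ)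
    (hda : a.re < d.re) (ha : 0 < a.re)
    (h1 : poch (d / 2) k ≠ 0)
    (h2 : poch ((d + 1) / 2) k ≠ 0)
    (h3 : poch (-(k : ℂ) + a + c + 1 - d) k ≠ 0)
    (h4 : poch ((k : ℂ) + d) k ≠ 0)
    (h5 : poch (d - c) k ≠ 0)
    (h6 : poch (d - a - c) k ≠ 0)
    (h7 : poch d k ≠ 0) :
    ∑ j ∈ Finset.range (k + 1),
        poch (a / 2) j * poch ((a + 1) / 2) j * poch (-(k : ℂ)) j * poch c j /
          (poch (d / 2) j * poch ((d + 1) / 2) j * poch (-(k : ℂ) + a + c + 1 - d) j *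
            (Nat.factorial j : ℂ)) =
      (poch (d - a) k * poch (d - c) k / (poch (d - a - c) k * poch d k)) *
        ∑ j ∈ Finset.range (k + 1),
          poch (-(k : ℂ)) j * poch a j * poch c j /
            (poch ((k : ℂ) + d) j * poch (d - c) j * (Nat.factorial j : ℂ)) :=
  askey_ismail_transformation_general k a c d h3 h4 h5 h7
end

section
/- Let k be a nonnegative integer and let a be a complex number. Then lim_{ε → 0} Σ_{j=0}^{k} [(-k)_j · (a)_j] / [(-k+ε)_j · j!] = (-k-a)_k / (-k)_k, the limit being taken over complex ε ≠ 0 for which all denominators are nonzero. -/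
/-!
Since `(-k)_j ≠ 0` for `j ≤ k`, the factor `(-k)_j` cancels in the limit and each term tends to
`(a)_j / j!` by continuity. The sum of these is `(a + 1)_k / k!` (a hockey-stick identity), and the
reflection `(-k - a)_k = (-1)^k (a + 1)_k` identifies this with the stated value.
-/

open Filter Topology

open Polynomial Finset

section

variable {R : Type*} [CommRing R]

theorem ascPochhammer_eval_neg_natCast_sub (k : ℕ) (a : R) :
    (ascPochhammer R k).eval (-(k : R) - a) = (-1) ^ k * (ascPochhammer R k).eval (a + 1) := by
  rw [show -(k : R) - a = -(a + k) by ring, ascPochhammer_eval_neg_eq_descPochhammer,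
    descPochhammer_eval_eq_ascPochhammer, add_sub_cancel_right]

theorem ascPochhammer_eval_neg_natCast_self (k : ℕ) :
    (ascPochhammer R k).eval (-(k : R)) = (-1) ^ k * k.factorial := by
  simpa using ascPochhammer_eval_neg_natCast_sub k (0 : R)

theorem ascPochhammer_eval_neg_natCast_ne_zero [IsDomain R] [CharZero R] {j k : ℕ} (h : j ≤ k) :
    (ascPochhammer R j).eval (-(k : R)) ≠ 0 := by
  rw [ne_eq, ascPochhammer_eval_eq_zero_iff]
  rintro ⟨i, hi, hik⟩
  rw [neg_neg, Nat.cast_inj] at hik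
  omega

end

theorem sum_range_ascPochhammer_eval_div_factorial {K : Type*} [Field K] [CharZero K]
    (a : K) (k : ℕ) :
    ∑ j ∈ range (k + 1), (ascPochhammer K j).eval a / j.factorial
      = (ascPochhammer K k).eval (a + 1) / k.factorial := by
  induction k with
  | zero => simp
  | succ k ih =>
    rw [sum_range_succ, ih, ascPochhammer_succ_eval k (a + 1), ascPochhammer_succ_left,
      Nat.factorial_succ]
    simp only [eval_mul, eval_X, eval_comp, eval_add, eval_one, Nat.cast_mul, Nat.cast_succ]
    field_simp
    ring

theorem poch_eq_eval_ascPochhammer (a : ℂ) (l : ℕ) : poch a l = (ascPochhammer ℂ l).eval a := by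
  induction l with
  | zero => simp [poch]
  | succ l ih => rw [poch, prod_range_succ, ← poch, ih, ascPochhammer_succ_eval]

/-- `lim_{ε→0} ₂F₁(-k, a; -k+ε; 1) = (-k-a)_k / (-k)_k`, the limit being taken over complex
`ε ≠ 0` for which all denominators are nonzero. -/
theorem limit_2F1_degenerate (k : ℕ) (a : ℂ) :
    Tendsto
      (fun ε : ℂ => ∑ j ∈ Finset.range (k + 1),
        poch (-(k : ℂ)) j * poch a j / (poch (-(k : ℂ) + ε) j * (Nat.factorial j : ℂ)))
      (𝓝[{ε : ℂ | ε ≠ 0 ∧ ∀ j ≤ k, poch (-(k : ℂ) + ε) j ≠ 0}] 0)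
      (𝓝 (poch (-(k : ℂ) - a) k / poch (-(k : ℂ)) k)) := by
  simp only [poch_eq_eval_ascPochhammer]
  have hvalue : (ascPochhammer ℂ k).eval (-(k : ℂ) - a) / (ascPochhammer ℂ k).eval (-(k : ℂ))
      = ∑ j ∈ range (k + 1), (ascPochhammer ℂ j).eval a / j.factorial := by
    rw [sum_range_ascPochhammer_eval_div_factorial, ascPochhammer_eval_neg_natCast_sub,
      ascPochhammer_eval_neg_natCast_self, mul_div_mul_left _ _ (by simp)]
  rw [hvalue]
  refine (tendsto_finsetSum _ fun j hj => ?_).mono_left nhdsWithin_le_nhds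
  have hne : (ascPochhammer ℂ j).eval (-(k : ℂ)) ≠ 0 :=
    ascPochhammer_eval_neg_natCast_ne_zero (Nat.lt_succ_iff.mp (mem_range.mp hj))
  have hden : Tendsto (fun ε : ℂ => (ascPochhammer ℂ j).eval (-(k : ℂ) + ε)) (𝓝 0)
      (𝓝 ((ascPochhammer ℂ j).eval (-(k : ℂ)))) :=
    ((ascPochhammer ℂ j).continuous.comp (continuous_const_add _)).tendsto' 0 _ (by simp)
  rw [← mul_div_mul_left _ _ hne]
  exact tendsto_const_nhds.div (hden.mul_const _)
    (mul_ne_zero hne (Nat.cast_ne_zero.mpr j.factorial_ne_zero))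
end

section
/- Let α, β, m be complex numbers such that α+β+1 = m and α is not a nonnegative integer, and such that none of β+1, m+1, m-β, m+1-α is a nonpositive integer and Re(m-β-α) > 0. Then Σ_{j=0}^{∞} [(β+1)_j · (α)_j] / [(m+1)_j · j!] = Γ(m+1)·Γ(m-β-α) / (Γ(m-β)·Γ(m+1-α)), and consequently [Γ(β+1)/Γ(m)] · Σ_{j=0}^{∞} [(β+1)_j · (α)_j] / [(m+1)_j · j!] = m / ((m-α)·Γ(α+1)). -/
/-!
When `c = a + b + 1` the partial sums of `₂F₁(a, b; c; 1)` telescope: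
`∑_{j ≤ n} (a)_j (b)_j / ((c)_j j!) = (a+1)_n (b+1)_n / ((c)_n n!)`, because
`(a+1+n)(b+1+n) = (c+n)(n+1) + ab`. By Euler's limit formula for `Γ` the right-hand side tends to
`Γ(c) / (Γ(a+1) Γ(b+1))`. As the `(n+1)`-st term is `ab / ((c+n)(n+1))` times the partial sum up
to `n`, the terms are `O(n⁻²)` and the series converges absolutely. For `a = β + 1`, `b = α`,
`c = m + 1` this is Gauss's sum with `m - β - α = 1`, and the second identity follows from
`Γ(s + 1) = s Γ(s)`.
-/

open Filter Finset Topology Nat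

lemma add_natCast_ne_zero {s : ℂ} (hs : ∀ n : ℕ, s ≠ -n) (n : ℕ) : s + n ≠ 0 :=
  fun h => hs n (eq_neg_of_add_eq_zero_left h)

lemma poch_succ (a : ℂ) (l : ℕ) : poch a (l + 1) = poch a l * (a + l) := prod_range_succ _ l

lemma poch_succ' (a : ℂ) (l : ℕ) : poch a (l + 1) = a * poch (a + 1) l := by
  simp only [poch, prod_range_succ', cast_add, cast_one, cast_zero, add_zero]
  rw [mul_comm]
  exact congrArg (a * ·) (prod_congr rfl fun i _ => by ring)

lemma poch_ne_zero {a : ℂ} (ha : ∀ n : ℕ, a ≠ -n) (l : ℕ) : poch a l ≠ 0 :=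
  prod_ne_zero_iff.mpr fun i _ => add_natCast_ne_zero ha i

lemma GammaSeq_eq_div_poch (s : ℂ) (n : ℕ) :
    Complex.GammaSeq s n = (n : ℂ) ^ s * n ! / poch s (n + 1) :=
  rfl

noncomputable def gaussTerm (a b c : ℂ) (j : ℕ) : ℂ :=
  poch a j * poch b j / (poch c j * j !)

lemma gaussTerm_succ (a b c : ℂ) (n : ℕ) :
    gaussTerm a b c (n + 1) = gaussTerm a b c n * ((a + n) * (b + n) / ((c + n) * (n + 1))) := by
  simp only [gaussTerm, poch_succ, factorial_succ, cast_mul, cast_succ, div_eq_mul_inv, mul_inv]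
  ring

lemma gaussTerm_succ_eq_mul_gaussTerm_add_one (a b c : ℂ) (n : ℕ) :
    gaussTerm a b c (n + 1) = a * b / ((c + n) * (n + 1)) * gaussTerm (a + 1) (b + 1) c n := by
  simp only [gaussTerm, poch_succ' a, poch_succ' b, poch_succ c, factorial_succ, cast_mul,
    cast_succ, div_eq_mul_inv, mul_inv]
  ring

lemma sum_range_succ_gaussTerm (a b : ℂ) (hc : ∀ n : ℕ, a + b + 1 ≠ -n) (n : ℕ) :
    ∑ j ∈ range (n + 1), gaussTerm a b (a + b + 1) j =
      gaussTerm (a + 1) (b + 1) (a + b + 1) n := by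
  induction n with
  | zero => simp [gaussTerm, poch]
  | succ n ih =>
    have hcn := add_natCast_ne_zero hc n
    have hn : (n : ℂ) + 1 ≠ 0 := cast_add_one_ne_zero n
    rw [sum_range_succ, ih, gaussTerm_succ_eq_mul_gaussTerm_add_one, gaussTerm_succ]
    field_simp
    ring

lemma summable_of_tendsto_natCast_sq_mul {𝕜 : Type*} [RCLike 𝕜] {f : ℕ → 𝕜} {L : 𝕜}
    (h : Tendsto (fun n : ℕ => (n : 𝕜) ^ 2 * f n) atTop (𝓝 L)) : Summable f := by
  obtain ⟨C, hC⟩ := h.norm.isBoundedUnder_le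
  refine Summable.of_norm_bounded_eventually_nat
    ((Real.summable_nat_pow_inv.mpr one_lt_two).mul_left C) ?_
  filter_upwards [eventually_map.mp hC, eventually_ne_atTop 0] with n hn hn0
  rw [norm_mul, norm_pow, RCLike.norm_natCast] at hn
  rw [← div_eq_mul_inv, le_div_iff₀ (by positivity)]
  linarith

lemma tendsto_gaussTerm_of_add_eq (x y z : ℂ) (hxyz : x + y = z + 1) (hx : ∀ n : ℕ, x ≠ -n)
    (hy : ∀ n : ℕ, y ≠ -n) (hz : ∀ n : ℕ, z ≠ -n) :
    Tendsto (gaussTerm x y z) atTop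
      (𝓝 (Complex.Gamma z / (Complex.Gamma x * Complex.Gamma y))) := by
  have hGammaSeq := (Complex.GammaSeq_tendsto_Gamma z).div
    ((Complex.GammaSeq_tendsto_Gamma x).mul (Complex.GammaSeq_tendsto_Gamma y))
    (mul_ne_zero (Complex.Gamma_ne_zero hx) (Complex.Gamma_ne_zero hy))
  -- `gaussTerm x y z n` is this factor times the quotient of `GammaSeq`s, by `n^z = n^x n^y / n`
  have hfactor : Tendsto (fun n : ℕ => (n : ℂ) / (n + x) * ((n : ℂ) / (n + y)) *
      (1 + z * (n : ℂ)⁻¹)) atTop (𝓝 1) := by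
    simpa using ((tendsto_natCast_div_add_atTop x).mul (tendsto_natCast_div_add_atTop y)).mul
      (tendsto_const_nhds.add (tendsto_inv_atTop_nhds_zero_nat.const_mul z))
  refine (mul_one (_ : ℂ) ▸ hGammaSeq.mul hfactor).congr' ?_
  filter_upwards [eventually_ne_atTop 0] with n hn
  have hn' : (n : ℂ) ≠ 0 := cast_ne_zero.mpr hn
  have hcpow : (n : ℂ) ^ z = (n : ℂ) ^ x * (n : ℂ) ^ y / n := by
    rw [← Complex.cpow_add _ _ hn', hxyz, Complex.cpow_add _ _ hn', Complex.cpow_one,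
      mul_div_cancel_right₀ _ hn']
  have := add_natCast_ne_zero hx n
  have := add_natCast_ne_zero hy n
  have := add_natCast_ne_zero hz n
  have := poch_ne_zero hx n
  have := poch_ne_zero hy n
  have := poch_ne_zero hz n
  have : (n : ℂ) ^ x ≠ 0 := by simp [Complex.cpow_eq_zero_iff, hn']
  have : (n : ℂ) ^ y ≠ 0 := by simp [Complex.cpow_eq_zero_iff, hn']
  have := (cast_ne_zero (R := ℂ)).mpr (factorial_ne_zero n)
  simp only [Pi.div_apply, GammaSeq_eq_div_poch, gaussTerm, poch_succ, hcpow,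
    add_comm (n : ℂ) x, add_comm (n : ℂ) y]
  field_simp
  ring

lemma Gamma_add_one_div_Gamma {s : ℂ} (hs : ∀ n : ℕ, s + 1 ≠ -n) :
    Complex.Gamma (s + 1) / Complex.Gamma s = s := by
  rcases eq_or_ne s 0 with rfl | hs0
  · -- `Γ 0 = 0`, so both sides are `0`
    simp [Complex.Gamma_zero]
  have hΓ : Complex.Gamma s ≠ 0 := Complex.Gamma_ne_zero fun
    | 0 => by simpa using hs0
    | k + 1 => fun h => hs k (by push_cast at h; linear_combination h)
  rw [Complex.Gamma_add_one s hs0, mul_div_cancel_right₀ _ hΓ]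

theorem hasSum_gaussTerm_add_add_one (a b : ℂ) (ha : ∀ n : ℕ, a + 1 ≠ -n)
    (hb : ∀ n : ℕ, b + 1 ≠ -n) (hc : ∀ n : ℕ, a + b + 1 ≠ -n) :
    HasSum (gaussTerm a b (a + b + 1))
      (Complex.Gamma (a + b + 1) / (Complex.Gamma (a + 1) * Complex.Gamma (b + 1))) := by
  have hlim := tendsto_gaussTerm_of_add_eq (a + 1) (b + 1) (a + b + 1) (by ring) ha hb hc
  have hsumm : Summable (gaussTerm a b (a + b + 1)) := by
    rw [← summable_nat_add_iff 1]
    refine summable_of_tendsto_natCast_sq_mul <|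
      (((hlim.const_mul (a * b)).mul (tendsto_natCast_div_add_atTop (a + b + 1))).mul
        (tendsto_natCast_div_add_atTop 1)).congr fun n => ?_
    simp only [gaussTerm_succ_eq_mul_gaussTerm_add_one, div_eq_mul_inv, mul_inv]
    ring
  rw [hsumm.hasSum_iff_tendsto_nat, ← tendsto_add_atTop_iff_nat 1]
  simpa only [sum_range_succ_gaussTerm a b hc] using hlim

theorem gauss_2F1_special_case_general (α β m : ℂ) (hm : α + β + 1 = m)
    (h1 : ∀ N : ℕ, β + 1 ≠ -(N : ℂ))
    (h2 : ∀ N : ℕ, m + 1 ≠ -(N : ℂ))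
    (h3 : ∀ N : ℕ, m - β ≠ -(N : ℂ)) :
    (∑' j : ℕ, poch (β + 1) j * poch α j / (poch (m + 1) j * (Nat.factorial j : ℂ)) =
      Complex.Gamma (m + 1) * Complex.Gamma (m - β - α) /
        (Complex.Gamma (m - β) * Complex.Gamma (m + 1 - α))) ∧
    (Complex.Gamma (β + 1) / Complex.Gamma m) *
        ∑' j : ℕ, poch (β + 1) j * poch α j / (poch (m + 1) j * (Nat.factorial j : ℂ)) =
      m / ((m - α) * Complex.Gamma (α + 1)) := by
  have hc : β + 1 + α + 1 = m + 1 := by linear_combination hm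
  have hb : m - β = α + 1 := by linear_combination -hm
  have hβ : ∀ N : ℕ, β + 1 + 1 ≠ -(N : ℂ) := fun N h =>
    h1 (N + 1) (by push_cast; linear_combination h)
  have hsum :
      ∑' j : ℕ, poch (β + 1) j * poch α j / (poch (m + 1) j * (Nat.factorial j : ℂ)) =
        Complex.Gamma (m + 1) / (Complex.Gamma (β + 1 + 1) * Complex.Gamma (α + 1)) := by
    rw [← hc]
    exact (hasSum_gaussTerm_add_add_one (β + 1) α hβ (hb ▸ h3) (hc ▸ h2)).tsum_eq
  rw [hsum, show m - β - α = 1 by linear_combination -hm, hb,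
    show m + 1 - α = β + 1 + 1 by linear_combination -hm,
    show m - α = β + 1 by linear_combination -hm]
  refine ⟨by rw [Complex.Gamma_one, mul_one, mul_comm (Complex.Gamma _)], ?_⟩
  calc Complex.Gamma (β + 1) / Complex.Gamma m *
        (Complex.Gamma (m + 1) / (Complex.Gamma (β + 1 + 1) * Complex.Gamma (α + 1)))
      = Complex.Gamma (m + 1) / Complex.Gamma m *
          (Complex.Gamma (β + 1 + 1) / Complex.Gamma (β + 1))⁻¹ / Complex.Gamma (α + 1) := by
        simp only [div_eq_mul_inv, mul_inv, inv_inv]; ring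
    _ = m / ((β + 1) * Complex.Gamma (α + 1)) := by
      rw [Gamma_add_one_div_Gamma h2, Gamma_add_one_div_Gamma hβ, ← div_eq_mul_inv, div_div]

/-- Gauss's theorem applied to `₂F₁(β+1, α; m+1; 1)` when `α + β + 1 = m`, together with the
resulting closed form `m / ((m-α)·Γ(α+1))`. -/
theorem gauss_2F1_special_case (α β m : ℂ) (hm : α + β + 1 = m)
    (hα : ∀ N : ℕ, α ≠ (N : ℂ))
    (h1 : ∀ N : ℕ, β + 1 ≠ -(N : ℂ))
    (h2 : ∀ N : ℕ, m + 1 ≠ -(N : ℂ))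
    (h3 : ∀ N : ℕ, m - β ≠ -(N : ℂ))
    (h4 : ∀ N : ℕ, m + 1 - α ≠ -(N : ℂ))
    (hre : 0 < (m - β - α).re) :
    (∑' j : ℕ, poch (β + 1) j * poch α j / (poch (m + 1) j * (Nat.factorial j : ℂ)) =
      Complex.Gamma (m + 1) * Complex.Gamma (m - β - α) /
        (Complex.Gamma (m - β) * Complex.Gamma (m + 1 - α))) ∧
    (Complex.Gamma (β + 1) / Complex.Gamma m) *
        ∑' j : ℕ, poch (β + 1) j * poch α j / (poch (m + 1) j * (Nat.factorial j : ℂ)) =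
      m / ((m - α) * Complex.Gamma (α + 1)) :=
  gauss_2F1_special_case_general α β m hm h1 h2 h3
end
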